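/- arXiv:0805.3437 — 3 statements merged into one kernel-verified Lean document; each statement's English description precedes it below -/
import Mathlib

section
/- Let α, β, γ ∈ Aut_Hopf(H) and let M be a finite-dimensional (αβ,γβ)-Yetter-Drinfeld module; let F(M) be the (α,γ)-Yetter-Drinfeld module obtained from M via the functor F (action h → m = β⁻¹(h)·m, unchanged coaction). Then End(M) = End(F(M)) and End(M)^op = End(F(M))^op as algebras in _H𝒴𝒟^H, i.e. the algebra structures, left H-actions and right H-coactions coincide. -/
open TensorProduct

noncomputable section

namespace GYD

variable (k H : Type) [Field k] [Ring H] [HopfAlgebra k H]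

/-- `φ` is a Hopf algebra automorphism of `H` (a linear equivalence which is both an
algebra morphism and a coalgebra morphism). -/
def IsHopfAut (φ : H ≃ₗ[k] H) : Prop :=
  (∀ x y : H, φ (x * y) = φ x * φ y) ∧ (φ 1 = 1) ∧
  (∀ h : H, Coalgebra.comul (R := k) (φ h)
      = TensorProduct.map φ.toLinearMap φ.toLinearMap (Coalgebra.comul (R := k) h)) ∧
  (∀ h : H, Coalgebra.counit (R := k) (φ h) = Coalgebra.counit (R := k) h)

/-- `Sinv` is a two-sided inverse of the antipode of `H`. -/
def IsAntipodeInv (Sinv : H → H) : Prop :=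
  (∀ h : H, HopfAlgebra.antipode (R := k) (Sinv h) = h) ∧
  (∀ h : H, Sinv (HopfAlgebra.antipode (R := k) h) = h)

/-- The data `(act, coact)` makes `M` an `(α, β)`-Yetter-Drinfeld module over `H`:
`M` is a left `H`-module, a right `H`-comodule, and the compatibility
`(h·m)₍₀₎ ⊗ (h·m)₍₁₎ = h₂·m₍₀₎ ⊗ β(h₃) m₍₁₎ α(Sinv(h₁))` holds (expressed via
arbitrary finite representations of `(Δ ⊗ id)(Δ h)` and of `coact m`). -/
def IsYD (Sinv α β : H → H) {M : Type} [AddCommGroup M] [Module k M]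
    (act : H →ₗ[k] M →ₗ[k] M) (coact : M →ₗ[k] M ⊗[k] H) : Prop :=
  (∀ m : M, act 1 m = m) ∧
  (∀ (g h : H) (m : M), act (g * h) m = act g (act h m)) ∧
  (∀ m : M, LinearMap.rTensor H coact (coact m)
      = (TensorProduct.assoc k M H H).symm
          (LinearMap.lTensor M (Coalgebra.comul (R := k)) (coact m))) ∧
  (∀ m : M,
    TensorProduct.rid k M (LinearMap.lTensor M (Coalgebra.counit (R := k)) (coact m)) = m) ∧
  (∀ (h : H) (m : M) (s t : Finset ℕ) (a b c : ℕ → H) (m₀ : ℕ → M) (m₁ : ℕ → H),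
    LinearMap.rTensor H (Coalgebra.comul (R := k)) (Coalgebra.comul (R := k) h)
        = ∑ i ∈ s, (a i ⊗ₜ[k] b i) ⊗ₜ[k] c i →
    coact m = ∑ j ∈ t, m₀ j ⊗ₜ[k] m₁ j →
    coact (act h m) = ∑ i ∈ s, ∑ j ∈ t,
      act (b i) (m₀ j) ⊗ₜ[k] (β (c i) * m₁ j * α (Sinv (a i))))

/-- Characterization of the action `h · (m ⊗ n) = θ₁(h₁)·m ⊗ θ₂(h₂)·n` on `M ⊗ N`. -/
def TensorActChar (θ₁ θ₂ : H → H) {M N : Type} [AddCommGroup M] [Module k M]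
    [AddCommGroup N] [Module k N]
    (actM : H →ₗ[k] M →ₗ[k] M) (actN : H →ₗ[k] N →ₗ[k] N)
    (act : H →ₗ[k] (M ⊗[k] N) →ₗ[k] (M ⊗[k] N)) : Prop :=
  ∀ (h : H) (m : M) (n : N) (s : Finset ℕ) (p q : ℕ → H),
    Coalgebra.comul (R := k) h = ∑ i ∈ s, p i ⊗ₜ[k] q i →
    act h (m ⊗ₜ[k] n) = ∑ i ∈ s, actM (θ₁ (p i)) m ⊗ₜ[k] actN (θ₂ (q i)) n

/-- Characterization of the "type two" action `h · (m ⊗ n) = h₂·m ⊗ h₁·n` on `M ⊗ N`. -/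
def TensorActCharTwo {M N : Type} [AddCommGroup M] [Module k M]
    [AddCommGroup N] [Module k N]
    (actM : H →ₗ[k] M →ₗ[k] M) (actN : H →ₗ[k] N →ₗ[k] N)
    (act : H →ₗ[k] (M ⊗[k] N) →ₗ[k] (M ⊗[k] N)) : Prop :=
  ∀ (h : H) (m : M) (n : N) (s : Finset ℕ) (p q : ℕ → H),
    Coalgebra.comul (R := k) h = ∑ i ∈ s, p i ⊗ₜ[k] q i →
    act h (m ⊗ₜ[k] n) = ∑ i ∈ s, actM (q i) m ⊗ₜ[k] actN (p i) n

/-- Characterization of the coaction `m ⊗ n ↦ (m₍₀₎ ⊗ n₍₀₎) ⊗ n₍₁₎ m₍₁₎` on `M ⊗ N`. -/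
def TensorCoactChar {M N : Type} [AddCommGroup M] [Module k M]
    [AddCommGroup N] [Module k N]
    (coactM : M →ₗ[k] M ⊗[k] H) (coactN : N →ₗ[k] N ⊗[k] H)
    (coact : M ⊗[k] N →ₗ[k] (M ⊗[k] N) ⊗[k] H) : Prop :=
  ∀ (m : M) (n : N) (s t : Finset ℕ) (m₀ : ℕ → M) (m₁ : ℕ → H) (n₀ : ℕ → N) (n₁ : ℕ → H),
    coactM m = ∑ i ∈ s, m₀ i ⊗ₜ[k] m₁ i →
    coactN n = ∑ j ∈ t, n₀ j ⊗ₜ[k] n₁ j →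
    coact (m ⊗ₜ[k] n) = ∑ i ∈ s, ∑ j ∈ t, (m₀ i ⊗ₜ[k] n₀ j) ⊗ₜ[k] (n₁ j * m₁ i)

/-- Characterization of the "type two" coaction `m ⊗ n ↦ (m₍₀₎ ⊗ n₍₀₎) ⊗ m₍₁₎ n₍₁₎`. -/
def TensorCoactCharTwo {M N : Type} [AddCommGroup M] [Module k M]
    [AddCommGroup N] [Module k N]
    (coactM : M →ₗ[k] M ⊗[k] H) (coactN : N →ₗ[k] N ⊗[k] H)
    (coact : M ⊗[k] N →ₗ[k] (M ⊗[k] N) ⊗[k] H) : Prop :=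
  ∀ (m : M) (n : N) (s t : Finset ℕ) (m₀ : ℕ → M) (m₁ : ℕ → H) (n₀ : ℕ → N) (n₁ : ℕ → H),
    coactM m = ∑ i ∈ s, m₀ i ⊗ₜ[k] m₁ i →
    coactN n = ∑ j ∈ t, n₀ j ⊗ₜ[k] n₁ j →
    coact (m ⊗ₜ[k] n) = ∑ i ∈ s, ∑ j ∈ t, (m₀ i ⊗ₜ[k] n₀ j) ⊗ₜ[k] (m₁ i * n₁ j)

/-- Characterization of the action `(h · f)(m) = f (θ(h) · m)` on the dual space. -/
def DualActChar (θ : H → H) {M : Type} [AddCommGroup M] [Module k M]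
    (actM : H →ₗ[k] M →ₗ[k] M)
    (actD : H →ₗ[k] Module.Dual k M →ₗ[k] Module.Dual k M) : Prop :=
  ∀ (h : H) (f : Module.Dual k M) (m : M), actD h f m = f (actM (θ h) m)

/-- Characterization of the coaction `f₍₀₎(m) ⊗ f₍₁₎ = f(m₍₀₎) ⊗ σ(m₍₁₎)` on the dual space
(expressed through contraction against evaluation at each `m`). -/
def DualCoactChar (σ : H → H) {M : Type} [AddCommGroup M] [Module k M]
    (coactM : M →ₗ[k] M ⊗[k] H)
    (coactD : Module.Dual k M →ₗ[k] Module.Dual k M ⊗[k] H) : Prop :=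
  ∀ (f : Module.Dual k M) (m : M) (t : Finset ℕ) (m₀ : ℕ → M) (m₁ : ℕ → H),
    coactM m = ∑ j ∈ t, m₀ j ⊗ₜ[k] m₁ j →
    TensorProduct.lid k H (LinearMap.rTensor H (Module.Dual.eval k M m) (coactD f))
      = ∑ j ∈ t, f (m₀ j) • σ (m₁ j)

/-- Characterization of the action `(h · u)(m) = θ(h₁) · u (θ(S(h₂)) · m)` on `End(M)`. -/
def EndActChar (θ : H → H) {M : Type} [AddCommGroup M] [Module k M]
    (actM : H →ₗ[k] M →ₗ[k] M)
    (actE : H →ₗ[k] Module.End k M →ₗ[k] Module.End k M) : Prop :=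
  ∀ (h : H) (u : Module.End k M) (m : M) (s : Finset ℕ) (p q : ℕ → H),
    Coalgebra.comul (R := k) h = ∑ i ∈ s, p i ⊗ₜ[k] q i →
    actE h u m = ∑ i ∈ s,
      actM (θ (p i)) (u (actM (θ (HopfAlgebra.antipode (R := k) (q i))) m))

/-- Characterization of the coaction `u₍₀₎(m) ⊗ u₍₁₎ = u(m₍₀₎)₍₀₎ ⊗ Sinv(m₍₁₎) u(m₍₀₎)₍₁₎`
on `End(M)`, expressed through contraction against evaluation at each `m`. -/
def EndCoactChar (Sinv : H → H) {M : Type} [AddCommGroup M] [Module k M]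
    (coactM : M →ₗ[k] M ⊗[k] H)
    (coactE : Module.End k M →ₗ[k] Module.End k M ⊗[k] H) : Prop :=
  ∀ (u : Module.End k M) (m : M) (t : Finset ℕ) (m₀ : ℕ → M) (m₁ : ℕ → H)
    (r : ℕ → Finset ℕ) (n₀ : ℕ → ℕ → M) (n₁ : ℕ → ℕ → H),
    coactM m = ∑ j ∈ t, m₀ j ⊗ₜ[k] m₁ j →
    (∀ j ∈ t, coactM (u (m₀ j)) = ∑ l ∈ r j, n₀ j l ⊗ₜ[k] n₁ j l) →
    LinearMap.rTensor H (LinearMap.applyₗ (R := k) m) (coactE u)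
      = ∑ j ∈ t, ∑ l ∈ r j, n₀ j l ⊗ₜ[k] (Sinv (m₁ j) * n₁ j l)

/-- Characterization of the action `(h · u)(m) = θ(h₂) · u (θ(Sinv(h₁)) · m)` on `End(M)ᵒᵖ`. -/
def EndOpActChar (θ Sinv : H → H) {M : Type} [AddCommGroup M] [Module k M]
    (actM : H →ₗ[k] M →ₗ[k] M)
    (actE : H →ₗ[k] (Module.End k M)ᵐᵒᵖ →ₗ[k] (Module.End k M)ᵐᵒᵖ) : Prop :=
  ∀ (h : H) (u : (Module.End k M)ᵐᵒᵖ) (m : M) (s : Finset ℕ) (p q : ℕ → H),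
    Coalgebra.comul (R := k) h = ∑ i ∈ s, p i ⊗ₜ[k] q i →
    (actE h u).unop m = ∑ i ∈ s,
      actM (θ (q i)) (u.unop (actM (θ (Sinv (p i))) m))

/-- Characterization of the coaction `u₍₀₎(m) ⊗ u₍₁₎ = u(m₍₀₎)₍₀₎ ⊗ u(m₍₀₎)₍₁₎ S(m₍₁₎)`
on `End(M)ᵒᵖ`, expressed through contraction against evaluation at each `m`. -/
def EndOpCoactChar {M : Type} [AddCommGroup M] [Module k M]
    (coactM : M →ₗ[k] M ⊗[k] H)
    (coactE : (Module.End k M)ᵐᵒᵖ →ₗ[k] (Module.End k M)ᵐᵒᵖ ⊗[k] H) : Prop :=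
  ∀ (u : (Module.End k M)ᵐᵒᵖ) (m : M) (t : Finset ℕ) (m₀ : ℕ → M) (m₁ : ℕ → H)
    (r : ℕ → Finset ℕ) (n₀ : ℕ → ℕ → M) (n₁ : ℕ → ℕ → H),
    coactM m = ∑ j ∈ t, m₀ j ⊗ₜ[k] m₁ j →
    (∀ j ∈ t, coactM (u.unop (m₀ j)) = ∑ l ∈ r j, n₀ j l ⊗ₜ[k] n₁ j l) →
    LinearMap.rTensor H ((LinearMap.applyₗ (R := k) m).comp
        (MulOpposite.opLinearEquiv k).symm.toLinearMap) (coactE u)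
      = ∑ j ∈ t, ∑ l ∈ r j,
          n₀ j l ⊗ₜ[k] (n₁ j l * HopfAlgebra.antipode (R := k) (m₁ j))

/-- `A`, with the Yetter-Drinfeld structure `(act, coact)`, is an algebra in the braided
category of Yetter-Drinfeld modules over `H`. -/
def IsYDAlgebra (Sinv : H → H) {A : Type} [Ring A] [Algebra k A]
    (act : H →ₗ[k] A →ₗ[k] A) (coact : A →ₗ[k] A ⊗[k] H) : Prop :=
  IsYD k H Sinv id id act coact ∧
  (∀ (h : H) (a b : A) (s : Finset ℕ) (p q : ℕ → H),
    Coalgebra.comul (R := k) h = ∑ i ∈ s, p i ⊗ₜ[k] q i →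
    act h (a * b) = ∑ i ∈ s, act (p i) a * act (q i) b) ∧
  (∀ h : H, act h 1 = Coalgebra.counit (R := k) h • (1 : A)) ∧
  (coact 1 = (1 : A) ⊗ₜ[k] (1 : H)) ∧
  (∀ (a b : A) (s t : Finset ℕ) (a₀ : ℕ → A) (a₁ : ℕ → H) (b₀ : ℕ → A) (b₁ : ℕ → H),
    coact a = ∑ i ∈ s, a₀ i ⊗ₜ[k] a₁ i →
    coact b = ∑ j ∈ t, b₀ j ⊗ₜ[k] b₁ j →
    coact (a * b) = ∑ i ∈ s, ∑ j ∈ t, (a₀ i * b₀ j) ⊗ₜ[k] (b₁ j * a₁ i))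

/-- Characterization of the smash product multiplication
`(a # b)(a' # b') = a a'₍₀₎ # (a'₍₁₎ · b) b'` on `A ⊗ B`. -/
def SmashMulChar {A B : Type} [Ring A] [Algebra k A] [Ring B] [Algebra k B]
    (actB : H →ₗ[k] B →ₗ[k] B) (coactA : A →ₗ[k] A ⊗[k] H)
    (mul : (A ⊗[k] B) →ₗ[k] (A ⊗[k] B) →ₗ[k] (A ⊗[k] B)) : Prop :=
  ∀ (a a' : A) (b b' : B) (t : Finset ℕ) (a₀ : ℕ → A) (a₁ : ℕ → H),
    coactA a' = ∑ j ∈ t, a₀ j ⊗ₜ[k] a₁ j →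
    mul (a ⊗ₜ[k] b) (a' ⊗ₜ[k] b') = ∑ j ∈ t, (a * a₀ j) ⊗ₜ[k] (actB (a₁ j) b * b')

end GYD
/-!
The actions on `End(M)` and `End(M)^op` involve the action of `M` only through
`h ↦ (αβ)⁻¹(h)·m = β⁻¹(α⁻¹ h)·m`, resp. `h ↦ β⁻¹(γ⁻¹ h)·m`, and these are literally
`α⁻¹(h) → m`, resp. `γ⁻¹(h) → m`, in `F(M)`. The coactions do not involve the action at all,
and since `M` is finite-dimensional an element of `End(M) ⊗ H` is determined by its
evaluations at the vectors of `M`, so the defining formulas pin the coactions down.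
-/

namespace TensorProduct

variable {R M N P Q E : Type*} [CommSemiring R] [AddCommMonoid M] [Module R M]
  [AddCommMonoid N] [Module R N] [AddCommMonoid P] [Module R P] [AddCommMonoid Q] [Module R Q]
  [AddCommMonoid E] [Module R E]

theorem exists_sum_range_tmul_eq (x : M ⊗[R] N) :
    ∃ (n : ℕ) (p : ℕ → M) (q : ℕ → N), x = ∑ i ∈ Finset.range n, p i ⊗ₜ[R] q i := by
  obtain ⟨n, p, q, rfl⟩ := exists_sum_tmul_eq x
  refine ⟨n, fun i => if hi : i < n then p ⟨i, hi⟩ else 0,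
    fun i => if hi : i < n then q ⟨i, hi⟩ else 0, ?_⟩
  rw [← Fin.sum_univ_eq_sum_range]
  simp

theorem eq_of_rTensor_applyₗ_eq [Module.Projective R M] [Module.Finite R M]
    {x y : (M →ₗ[R] P) ⊗[R] Q}
    (h : ∀ m : M, (LinearMap.applyₗ m).rTensor Q x = (LinearMap.applyₗ m).rTensor Q y) :
    x = y := by
  have rTensorHomToHomRTensor_apply' : ∀ (z : (M →ₗ[R] P) ⊗[R] Q) (m : M),
      rTensorHomToHomRTensor (.id R) M P Q z m = (LinearMap.applyₗ m).rTensor Q z := by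
    intro z m
    induction z with
    | zero => simp
    | tmul f q => simp [rTensorHomToHomRTensor_apply]
    | add z z' hz hz' => simp [hz, hz']
  apply (rTensorHomEquivHomRTensor R M P Q).injective
  ext m
  simp only [← LinearEquiv.coe_toLinearMap, rTensorHomEquivHomRTensor_toLinearMap,
    rTensorHomToHomRTensor_apply', h m]

theorem eq_of_rTensor_applyₗ_comp_eq [Module.Projective R M] [Module.Finite R M]
    (e : E ≃ₗ[R] (M →ₗ[R] P)) {x y : E ⊗[R] Q}
    (h : ∀ m : M, ((LinearMap.applyₗ m).comp e.toLinearMap).rTensor Q x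
      = ((LinearMap.applyₗ m).comp e.toLinearMap).rTensor Q y) :
    x = y := by
  apply (LinearEquiv.rTensor Q e).injective
  apply eq_of_rTensor_applyₗ_eq
  intro m
  exact (LinearMap.rTensor_comp_apply ..).symm.trans
    ((h m).trans (LinearMap.rTensor_comp_apply ..))

end TensorProduct

namespace GYD

variable {k H : Type} [Field k] [Ring H] [HopfAlgebra k H]
  {M : Type} [AddCommGroup M] [Module k M]

theorem EndActChar.eq_of_comp_eq {θ₁ θ₂ : H → H} {act₁ act₂ : H →ₗ[k] M →ₗ[k] M}
    {actE₁ actE₂ : H →ₗ[k] Module.End k M →ₗ[k] Module.End k M}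
    (h₁ : EndActChar k H θ₁ act₁ actE₁) (h₂ : EndActChar k H θ₂ act₂ actE₂)
    (hθ : ∀ h, act₁ (θ₁ h) = act₂ (θ₂ h)) :
    actE₁ = actE₂ := by
  ext h u m
  obtain ⟨n, p, q, hpq⟩ := exists_sum_range_tmul_eq (Coalgebra.comul (R := k) h)
  rw [h₁ h u m _ p q hpq, h₂ h u m _ p q hpq]
  simp only [hθ]

theorem EndOpActChar.eq_of_comp_eq {θ₁ θ₂ Sinv : H → H} {act₁ act₂ : H →ₗ[k] M →ₗ[k] M}
    {actE₁ actE₂ : H →ₗ[k] (Module.End k M)ᵐᵒᵖ →ₗ[k] (Module.End k M)ᵐᵒᵖ}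
    (h₁ : EndOpActChar k H θ₁ Sinv act₁ actE₁) (h₂ : EndOpActChar k H θ₂ Sinv act₂ actE₂)
    (hθ : ∀ h, act₁ (θ₁ h) = act₂ (θ₂ h)) :
    actE₁ = actE₂ := by
  ext h u : 2
  apply MulOpposite.unop_injective
  ext m
  obtain ⟨n, p, q, hpq⟩ := exists_sum_range_tmul_eq (Coalgebra.comul (R := k) h)
  rw [h₁ h u m _ p q hpq, h₂ h u m _ p q hpq]
  simp only [hθ]

variable [FiniteDimensional k M] {Sinv : H → H} {coactM : M →ₗ[k] M ⊗[k] H}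

theorem EndCoactChar.unique {coactE₁ coactE₂ : Module.End k M →ₗ[k] Module.End k M ⊗[k] H}
    (h₁ : EndCoactChar k H Sinv coactM coactE₁) (h₂ : EndCoactChar k H Sinv coactM coactE₂) :
    coactE₁ = coactE₂ := by
  ext u : 1
  refine eq_of_rTensor_applyₗ_eq fun m => ?_
  obtain ⟨n, m₀, m₁, hm⟩ := exists_sum_range_tmul_eq (coactM m)
  choose r n₀ n₁ hr using fun j => exists_sum_range_tmul_eq (coactM (u (m₀ j)))
  rw [h₁ u m _ m₀ m₁ (Finset.range ∘ r) n₀ n₁ hm (fun j _ => hr j),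
    h₂ u m _ m₀ m₁ (Finset.range ∘ r) n₀ n₁ hm (fun j _ => hr j)]

theorem EndOpCoactChar.unique
    {coactE₁ coactE₂ : (Module.End k M)ᵐᵒᵖ →ₗ[k] (Module.End k M)ᵐᵒᵖ ⊗[k] H}
    (h₁ : EndOpCoactChar k H coactM coactE₁) (h₂ : EndOpCoactChar k H coactM coactE₂) :
    coactE₁ = coactE₂ := by
  ext u : 1
  refine eq_of_rTensor_applyₗ_comp_eq (MulOpposite.opLinearEquiv k).symm fun m => ?_
  obtain ⟨n, m₀, m₁, hm⟩ := exists_sum_range_tmul_eq (coactM m)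
  choose r n₀ n₁ hr using fun j => exists_sum_range_tmul_eq (coactM (u.unop (m₀ j)))
  rw [h₁ u m _ m₀ m₁ (Finset.range ∘ r) n₀ n₁ hm (fun j _ => hr j),
    h₂ u m _ m₀ m₁ (Finset.range ∘ r) n₀ n₁ hm (fun j _ => hr j)]

end GYD

theorem statement_9_general
    (k H : Type) [Field k] [Ring H] [HopfAlgebra k H]
    (Sinv : H → H)
    (α β γ : H ≃ₗ[k] H)
    (M : Type) [AddCommGroup M] [Module k M] [FiniteDimensional k M]
    (actM : H →ₗ[k] M →ₗ[k] M) (coactM : M →ₗ[k] M ⊗[k] H)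
    -- End(M), for M an (αβ, γβ)-Yetter-Drinfeld module
    (actE₁ : H →ₗ[k] Module.End k M →ₗ[k] Module.End k M)
    (coactE₁ : Module.End k M →ₗ[k] Module.End k M ⊗[k] H)
    (hactE₁ : GYD.EndActChar k H (fun h => β.symm (α.symm h)) actM actE₁)
    (hcoactE₁ : GYD.EndCoactChar k H Sinv coactM coactE₁)
    -- End(F(M)), for F(M) the corresponding (α, γ)-Yetter-Drinfeld module
    (actE₂ : H →ₗ[k] Module.End k M →ₗ[k] Module.End k M)
    (coactE₂ : Module.End k M →ₗ[k] Module.End k M ⊗[k] H)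
    (hactE₂ : GYD.EndActChar k H ⇑α.symm (actM ∘ₗ β.symm.toLinearMap) actE₂)
    (hcoactE₂ : GYD.EndCoactChar k H Sinv coactM coactE₂)
    -- End(M)^op
    (actO₁ : H →ₗ[k] (Module.End k M)ᵐᵒᵖ →ₗ[k] (Module.End k M)ᵐᵒᵖ)
    (coactO₁ : (Module.End k M)ᵐᵒᵖ →ₗ[k] (Module.End k M)ᵐᵒᵖ ⊗[k] H)
    (hactO₁ : GYD.EndOpActChar k H (fun h => β.symm (γ.symm h)) Sinv actM actO₁)
    (hcoactO₁ : GYD.EndOpCoactChar k H coactM coactO₁)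
    -- End(F(M))^op
    (actO₂ : H →ₗ[k] (Module.End k M)ᵐᵒᵖ →ₗ[k] (Module.End k M)ᵐᵒᵖ)
    (coactO₂ : (Module.End k M)ᵐᵒᵖ →ₗ[k] (Module.End k M)ᵐᵒᵖ ⊗[k] H)
    (hactO₂ : GYD.EndOpActChar k H ⇑γ.symm Sinv (actM ∘ₗ β.symm.toLinearMap) actO₂)
    (hcoactO₂ : GYD.EndOpCoactChar k H coactM coactO₂) :
    actE₁ = actE₂ ∧ coactE₁ = coactE₂ ∧ actO₁ = actO₂ ∧ coactO₁ = coactO₂ :=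
  ⟨hactE₁.eq_of_comp_eq hactE₂ fun _ => rfl, hcoactE₁.unique hcoactE₂,
    hactO₁.eq_of_comp_eq hactO₂ fun _ => rfl, hcoactO₁.unique hcoactO₂⟩

theorem statement_9
    (k H : Type) [Field k] [Ring H] [HopfAlgebra k H]
    (Sinv : H → H) (hS : GYD.IsAntipodeInv k H Sinv)
    (α β γ : H ≃ₗ[k] H)
    (hα : GYD.IsHopfAut k H α) (hβ : GYD.IsHopfAut k H β) (hγ : GYD.IsHopfAut k H γ)
    (M : Type) [AddCommGroup M] [Module k M] [FiniteDimensional k M]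
    (actM : H →ₗ[k] M →ₗ[k] M) (coactM : M →ₗ[k] M ⊗[k] H)
    (hM : GYD.IsYD k H Sinv (⇑α ∘ ⇑β) (⇑γ ∘ ⇑β) actM coactM)
    -- End(M), for M an (αβ, γβ)-Yetter-Drinfeld module
    (actE₁ : H →ₗ[k] Module.End k M →ₗ[k] Module.End k M)
    (coactE₁ : Module.End k M →ₗ[k] Module.End k M ⊗[k] H)
    (hactE₁ : GYD.EndActChar k H (fun h => β.symm (α.symm h)) actM actE₁)
    (hcoactE₁ : GYD.EndCoactChar k H Sinv coactM coactE₁)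
    -- End(F(M)), for F(M) the corresponding (α, γ)-Yetter-Drinfeld module
    (actE₂ : H →ₗ[k] Module.End k M →ₗ[k] Module.End k M)
    (coactE₂ : Module.End k M →ₗ[k] Module.End k M ⊗[k] H)
    (hactE₂ : GYD.EndActChar k H ⇑α.symm (actM ∘ₗ β.symm.toLinearMap) actE₂)
    (hcoactE₂ : GYD.EndCoactChar k H Sinv coactM coactE₂)
    -- End(M)^op
    (actO₁ : H →ₗ[k] (Module.End k M)ᵐᵒᵖ →ₗ[k] (Module.End k M)ᵐᵒᵖ)
    (coactO₁ : (Module.End k M)ᵐᵒᵖ →ₗ[k] (Module.End k M)ᵐᵒᵖ ⊗[k] H)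
    (hactO₁ : GYD.EndOpActChar k H (fun h => β.symm (γ.symm h)) Sinv actM actO₁)
    (hcoactO₁ : GYD.EndOpCoactChar k H coactM coactO₁)
    -- End(F(M))^op
    (actO₂ : H →ₗ[k] (Module.End k M)ᵐᵒᵖ →ₗ[k] (Module.End k M)ᵐᵒᵖ)
    (coactO₂ : (Module.End k M)ᵐᵒᵖ →ₗ[k] (Module.End k M)ᵐᵒᵖ ⊗[k] H)
    (hactO₂ : GYD.EndOpActChar k H ⇑γ.symm Sinv (actM ∘ₗ β.symm.toLinearMap) actO₂)
    (hcoactO₂ : GYD.EndOpCoactChar k H coactM coactO₂) :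
    actE₁ = actE₂ ∧ coactE₁ = coactE₂ ∧ actO₁ = actO₂ ∧ coactO₁ = coactO₂ :=
  statement_9_general k H Sinv α β γ M actM coactM actE₁ coactE₁ hactE₁ hcoactE₁ actE₂ coactE₂
    hactE₂ hcoactE₂ actO₁ coactO₁ hactO₁ hcoactO₁ actO₂ coactO₂ hactO₂ hcoactO₂

end
end

section
/- Let α, β ∈ Aut_Hopf(H) and M an (α,β)-Yetter-Drinfeld module. Define M' to be the same vector space with the same left H-module structure and with right H-coaction m ↦ m₍₀₎ ⊗ αβ⁻¹(m₍₁₎), where m ↦ m₍₀₎ ⊗ m₍₁₎ is the coaction of M. Then M' is an (αβ⁻¹α, α)-Yetter-Drinfeld module. -/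
open TensorProduct

noncomputable section

/-!
Postcomposing the coaction of an `(α, β)`-Yetter-Drinfeld module with a Hopf automorphism `φ`
gives a `(φ α, φ β)`-Yetter-Drinfeld module: `φ` preserves the comultiplication and counit, so
the comodule axioms survive, and being multiplicative it carries `β(h₃) m₍₁₎ α(S⁻¹ h₁)` to
`φβ(h₃) φ(m₍₁₎) φα(S⁻¹ h₁)`. The theorem is the case `φ = α β⁻¹`.
-/

namespace GYD

variable {k H : Type} [Field k] [Ring H] [HopfAlgebra k H]

namespace IsHopfAut

variable {φ ψ : H ≃ₗ[k] H}

theorem symm (hφ : IsHopfAut k H φ) : IsHopfAut k H φ.symm := by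
  obtain ⟨hmul, hone, hcomul, hcounit⟩ := hφ
  refine ⟨fun x y => φ.injective ?_, φ.injective ?_, fun h => ?_, fun h => ?_⟩
  · simp [hmul]
  · simp [hone]
  · have := congrArg (TensorProduct.map φ.symm.toLinearMap φ.symm.toLinearMap)
      (hcomul (φ.symm h))
    simpa [TensorProduct.map_map, ← LinearEquiv.coe_trans] using this.symm
  · simpa using (hcounit (φ.symm h)).symm

theorem trans (hφ : IsHopfAut k H φ) (hψ : IsHopfAut k H ψ) : IsHopfAut k H (φ.trans ψ) := by
  refine ⟨fun x y => ?_, ?_, fun h => ?_, fun h => ?_⟩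
  · simp [hφ.1, hψ.1]
  · simp [hφ.2.1, hψ.2.1]
  · simp [hφ.2.2.1, hψ.2.2.1, TensorProduct.map_map]
  · simp [hφ.2.2.2, hψ.2.2.2]

end IsHopfAut

variable {Sinv α β : H → H} {M : Type} [AddCommGroup M] [Module k M]
  {act : H →ₗ[k] M →ₗ[k] M} {coact : M →ₗ[k] M ⊗[k] H} {φ : H ≃ₗ[k] H}

theorem IsYD.lTensor_comp_coact (hM : IsYD k H Sinv α β act coact) (hφ : IsHopfAut k H φ) :
    IsYD k H Sinv (φ ∘ α) (φ ∘ β) act (LinearMap.lTensor M φ.toLinearMap ∘ₗ coact) := by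
  obtain ⟨hone, hmul, hcoassoc, hcounit, hcompat⟩ := hM
  have hφcomul : Coalgebra.comul (R := k) ∘ₗ φ.toLinearMap
      = TensorProduct.map φ.toLinearMap φ.toLinearMap ∘ₗ Coalgebra.comul :=
    LinearMap.ext hφ.2.2.1
  have hφcounit : Coalgebra.counit (R := k) ∘ₗ φ.toLinearMap = Coalgebra.counit :=
    LinearMap.ext hφ.2.2.2
  refine ⟨hone, hmul, fun m => ?_, fun m => ?_, ?_⟩
  · calc _ = TensorProduct.map (TensorProduct.map LinearMap.id φ.toLinearMap) φ.toLinearMap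
          (LinearMap.rTensor H coact (coact m)) := by
          simp only [LinearMap.rTensor, LinearMap.lTensor, LinearMap.comp_apply,
            TensorProduct.map_map, LinearMap.id_comp, LinearMap.comp_id]
      _ = _ := by
          rw [hcoassoc, TensorProduct.map_map_assoc_symm]
          simp only [LinearMap.lTensor, LinearMap.comp_apply, TensorProduct.map_map,
            LinearMap.id_comp, hφcomul]
  · rw [LinearMap.comp_apply, ← LinearMap.lTensor_comp_apply, hφcounit, hcounit]
  · intro h m s t a b c m₀ m₁ hh hm
    have hm' : coact m = ∑ j ∈ t, m₀ j ⊗ₜ[k] φ.symm (m₁ j) := by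
      have := congrArg (LinearMap.lTensor M φ.symm.toLinearMap) hm
      simpa [← LinearMap.lTensor_comp_apply, ← LinearEquiv.coe_trans] using this
    rw [LinearMap.comp_apply, hcompat h m s t a b c m₀ _ hh hm']
    simp [hφ.1]

end GYD

theorem statement_13_general
    (k H : Type) [Field k] [Ring H] [HopfAlgebra k H]
    (Sinv : H → H)
    (α β : H ≃ₗ[k] H)
    (hα : GYD.IsHopfAut k H α) (hβ : GYD.IsHopfAut k H β)
    (M : Type) [AddCommGroup M] [Module k M]
    (actM : H →ₗ[k] M →ₗ[k] M) (coactM : M →ₗ[k] M ⊗[k] H)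
    (hM : GYD.IsYD k H Sinv ⇑α ⇑β actM coactM) :
    GYD.IsYD k H Sinv (fun h => α (β.symm (α h))) ⇑α actM
      ((LinearMap.lTensor M (β.symm.trans α).toLinearMap) ∘ₗ coactM) := by
  have hM' := hM.lTensor_comp_coact (hβ.symm.trans hα)
  have hβα : ⇑(β.symm.trans α) ∘ ⇑β = ⇑α := funext fun h => by simp
  rwa [hβα] at hM'

theorem statement_13
    (k H : Type) [Field k] [Ring H] [HopfAlgebra k H]
    (Sinv : H → H) (hS : GYD.IsAntipodeInv k H Sinv)
    (α β : H ≃ₗ[k] H)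
    (hα : GYD.IsHopfAut k H α) (hβ : GYD.IsHopfAut k H β)
    (M : Type) [AddCommGroup M] [Module k M]
    (actM : H →ₗ[k] M →ₗ[k] M) (coactM : M →ₗ[k] M ⊗[k] H)
    (hM : GYD.IsYD k H Sinv ⇑α ⇑β actM coactM) :
    GYD.IsYD k H Sinv (fun h => α (β.symm (α h))) ⇑α actM
      ((LinearMap.lTensor M (β.symm.trans α).toLinearMap) ∘ₗ coactM) :=
  statement_13_general k H Sinv α β hα hβ M actM coactM hM

end
end

section
/- Let M be a finite-dimensional (α,β)-Yetter-Drinfeld module. Then the transpose map ι : End(M)^op → End(◇M), ι(u)(f) = f∘u, is an isomorphism of algebras in _H𝒴𝒟^H (an algebra isomorphism which is H-linear and H-colinear), where ◇M is viewed as a (β,α)-Yetter-Drinfeld module. -/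
/-! The transpose `u ↦ u*` is an anti-isomorphism `End M → End M*` for finite-dimensional `M`,
so out of `End(M)ᵒᵖ` it is an algebra isomorphism. Compatibility with the actions is a direct
computation once one knows that `β⁻¹` commutes with the antipode; this holds for any bialgebra
map `f`, since `S ∘ f` and `f ∘ S` are both convolution inverses of `f`. For the coactions, an
element of `End(M*) ⊗ H` is determined by its matrix coefficients `u ↦ (u f)(m)`, and on both
sides the coefficient at `(f, m)` is `f(u(m₍₀₎)₍₀₎) u(m₍₀₎)₍₁₎ S(m₍₁₎)`: on the left, `S⁻¹` from
the coaction on `End(◇M)` undoes the antipode in the coaction on `◇M`. -/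

open TensorProduct

noncomputable section

theorem TensorProduct.exists_finset_nat_sum_tmul {R M N : Type*} [CommSemiring R]
    [AddCommMonoid M] [Module R M] [AddCommMonoid N] [Module R N] (x : M ⊗[R] N) :
    ∃ (s : Finset ℕ) (m : ℕ → M) (n : ℕ → N), x = ∑ i ∈ s, m i ⊗ₜ[R] n i := by
  obtain ⟨c, m, n, rfl⟩ := exists_sum_tmul_eq x
  refine ⟨Finset.range c, fun i => if h : i < c then m ⟨i, h⟩ else 0,
    fun i => if h : i < c then n ⟨i, h⟩ else 0, ?_⟩
  rw [Finset.sum_range]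
  simp

theorem TensorProduct.lid_rTensor_sum_tmul {R M N ι : Type*} [CommSemiring R]
    [AddCommMonoid M] [Module R M] [AddCommMonoid N] [Module R N] (ξ : M →ₗ[R] R)
    (s : Finset ι) (m : ι → M) (n : ι → N) :
    TensorProduct.lid R N (ξ.rTensor N (∑ i ∈ s, m i ⊗ₜ[R] n i)) = ∑ i ∈ s, ξ (m i) • n i := by
  simp [map_sum]

theorem TensorProduct.ext_of_rTensor_basis_coord {R V N ι : Type*} [CommSemiring R]
    [AddCommMonoid V] [Module R V] [AddCommMonoid N] [Module R N] (b : Module.Basis ι R V)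
    {x y : V ⊗[R] N} (h : ∀ i, (b.coord i).rTensor N x = (b.coord i).rTensor N y) : x = y := by
  classical
  refine (equivFinsuppOfBasisLeft b).injective (Finsupp.ext fun i => ?_)
  rw [equivFinsuppOfBasisLeft_apply, equivFinsuppOfBasisLeft_apply, h]

theorem Module.Basis.coord_end {R V ι : Type*} [CommSemiring R] [AddCommMonoid V] [Module R V]
    [Fintype ι] [DecidableEq ι] (b : Module.Basis ι R V) (i j : ι) :
    b.end.coord (i, j) = b.coord i ∘ₗ LinearMap.applyₗ (b j) := by
  ext u
  simp [Matrix.stdBasis, LinearMap.toMatrix_apply]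

theorem TensorProduct.ext_of_rTensor_applyₗ {R V N : Type*} [CommSemiring R]
    [AddCommMonoid V] [Module R V] [Module.Free R V] [Module.Finite R V]
    [AddCommMonoid N] [Module R N] {x y : Module.End R V ⊗[R] N}
    (h : ∀ (v : V) (ψ : Module.Dual R V),
      (ψ ∘ₗ LinearMap.applyₗ v).rTensor N x = (ψ ∘ₗ LinearMap.applyₗ v).rTensor N y) :
    x = y := by
  classical
  let b := Module.Free.chooseBasis R V
  exact ext_of_rTensor_basis_coord b.end fun ij => by rw [b.coord_end]; exact h _ _

theorem Module.Dual.transpose_bijective {R M M' : Type*} [CommSemiring R]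
    [AddCommMonoid M] [Module R M] [AddCommMonoid M'] [Module R M'] [Module.IsReflexive R M'] :
    Function.Bijective (Module.Dual.transpose (R := R) (M := M) (M' := M')) := by
  refine ⟨fun u v huv => ?_, fun w => ?_⟩
  · ext m
    apply (Module.bijective_dual_eval R M').injective
    ext φ
    exact congr($huv φ m)
  · refine ⟨(Module.evalEquiv R M').symm.toLinearMap ∘ₗ w.dualMap ∘ₗ Module.Dual.eval R M, ?_⟩
    ext f m
    simp [Module.Dual.transpose_apply]

open WithConv in
theorem BialgHom.map_antipode {R A B : Type*} [CommSemiring R] [Semiring A] [HopfAlgebra R A]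
    [Semiring B] [HopfAlgebra R B] (f : A →ₐc[R] B) (a : A) :
    f (HopfAlgebra.antipode R a) = HopfAlgebra.antipode R (f a) := by
  have hleft : toConv (HopfAlgebra.antipode R ∘ₗ f.toLinearMap) * toConv f.toLinearMap = 1 := by
    apply WithConv.ofConv_injective
    calc _ = (1 : WithConv (B →ₗ[R] B)).ofConv ∘ₗ f.toLinearMap := by
          rw [← LinearMap.antipode_mul_id, LinearMap.convMul_comp_coalgHom_distrib _ _ f.toCoalgHom]
          rfl
      _ = _ := by ext; simp
  have hright : toConv f.toLinearMap * toConv (f.toLinearMap ∘ₗ HopfAlgebra.antipode R) = 1 := by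
    apply WithConv.ofConv_injective
    let g : A →ₐ[R] B := f
    calc _ = (toConv (g.toLinearMap ∘ₗ LinearMap.id) *
            toConv (g.toLinearMap ∘ₗ HopfAlgebra.antipode R)).ofConv := rfl
      _ = g.toLinearMap ∘ₗ (1 : WithConv (A →ₗ[R] A)).ofConv := by
          rw [← LinearMap.algHom_comp_convMul_distrib, LinearMap.id_mul_antipode]
      _ = _ := by ext; simp [g, AlgHomClass.commutes]
  exact (congr($(left_inv_eq_right_inv hleft hright).ofConv a)).symm

namespace GYD

variable {k H : Type} [Field k] [Ring H] [HopfAlgebra k H]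

local notation "S" => HopfAlgebra.antipode k (A := H)

def IsHopfAut.toBialgHom {φ : H ≃ₗ[k] H} (hφ : IsHopfAut k H φ) : H →ₐc[k] H where
  toLinearMap := φ.toLinearMap
  counit_comp := LinearMap.ext hφ.2.2.2
  map_comp_comul := LinearMap.ext fun h => (hφ.2.2.1 h).symm
  map_one' := hφ.2.1
  map_mul' := hφ.1

theorem IsHopfAut.antipode_symm_apply {φ : H ≃ₗ[k] H} (hφ : IsHopfAut k H φ) (x : H) :
    S (φ.symm x) = φ.symm (S x) := by
  rw [φ.eq_symm_apply]
  conv_rhs => rw [← φ.apply_symm_apply x]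
  exact hφ.toBialgHom.map_antipode (φ.symm x)

section Transpose

variable {Sinv : H → H} {M : Type} [AddCommGroup M] [Module k M]
  {actM : H →ₗ[k] M →ₗ[k] M} {coactM : M →ₗ[k] M ⊗[k] H}
  {ι : (Module.End k M)ᵐᵒᵖ →ₗ[k] Module.End k (Module.Dual k M)}

theorem DualCoactChar.sum_smul {σ : H → H}
    {coactD : Module.Dual k M →ₗ[k] Module.Dual k M ⊗[k] H}
    (hcoactD : DualCoactChar k H σ coactM coactD) {f : Module.Dual k M} {x : M}
    {s : Finset ℕ} {f₀ : ℕ → Module.Dual k M} {f₁ : ℕ → H}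
    (hf : coactD f = ∑ j ∈ s, f₀ j ⊗ₜ[k] f₁ j)
    {t : Finset ℕ} {x₀ : ℕ → M} {x₁ : ℕ → H} (hx : coactM x = ∑ q ∈ t, x₀ q ⊗ₜ[k] x₁ q) :
    ∑ j ∈ s, f₀ j x • f₁ j = ∑ q ∈ t, f (x₀ q) • σ (x₁ q) := by
  have := hcoactD f x t x₀ x₁ hx
  rwa [hf, lid_rTensor_sum_tmul] at this

theorem DualCoactChar.sum_smul_antipodeInv (hS : IsAntipodeInv k H Sinv)
    {coactD : Module.Dual k M →ₗ[k] Module.Dual k M ⊗[k] H}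
    (hcoactD : DualCoactChar k H (fun h => S h) coactM coactD) {f : Module.Dual k M} {x : M}
    {s : Finset ℕ} {f₀ : ℕ → Module.Dual k M} {f₁ : ℕ → H}
    (hf : coactD f = ∑ j ∈ s, f₀ j ⊗ₜ[k] f₁ j)
    {t : Finset ℕ} {x₀ : ℕ → M} {x₁ : ℕ → H} (hx : coactM x = ∑ q ∈ t, x₀ q ⊗ₜ[k] x₁ q) :
    ∑ j ∈ s, f₀ j x • Sinv (f₁ j) = ∑ q ∈ t, f (x₀ q) • x₁ q := by
  apply Function.LeftInverse.injective (g := Sinv) hS.2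
  simp only [map_sum, map_smul, hS.1]
  exact hcoactD.sum_smul hf hx

theorem transpose_act_eq (hS : IsAntipodeInv k H Sinv) {θ : H → H}
    (hθ : ∀ x, S (θ x) = θ (S x))
    {actO : H →ₗ[k] (Module.End k M)ᵐᵒᵖ →ₗ[k] (Module.End k M)ᵐᵒᵖ}
    {actD : H →ₗ[k] Module.Dual k M →ₗ[k] Module.Dual k M}
    {actED : H →ₗ[k] Module.End k (Module.Dual k M) →ₗ[k] Module.End k (Module.Dual k M)}
    (hactO : EndOpActChar k H θ Sinv actM actO) (hactD : DualActChar k H Sinv actM actD)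
    (hactED : EndActChar k H θ actD actED)
    (hι : ∀ u f m, ι u f m = f (u.unop m)) (h : H) (u : (Module.End k M)ᵐᵒᵖ) :
    ι (actO h u) = actED h (ι u) := by
  have hθS : ∀ x, Sinv (θ (S x)) = θ x := fun x => by rw [← hθ, hS.2]
  have hθSinv : ∀ x, Sinv (θ x) = θ (Sinv x) := fun x => by
    conv_lhs => rw [← hS.1 x]
    exact hθS _
  obtain ⟨s, p, q, hpq⟩ := exists_finset_nat_sum_tmul (Coalgebra.comul (R := k) h)
  ext f m
  rw [hι, hactO h u m s p q hpq, hactED h (ι u) f s p q hpq, map_sum, LinearMap.sum_apply]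
  refine Finset.sum_congr rfl fun i _ => ?_
  rw [hactD, hι, hactD, hθS, hθSinv]

theorem transpose_coact_eq [FiniteDimensional k M] (hS : IsAntipodeInv k H Sinv)
    {coactO : (Module.End k M)ᵐᵒᵖ →ₗ[k] (Module.End k M)ᵐᵒᵖ ⊗[k] H}
    {coactD : Module.Dual k M →ₗ[k] Module.Dual k M ⊗[k] H}
    {coactED : Module.End k (Module.Dual k M) →ₗ[k] Module.End k (Module.Dual k M) ⊗[k] H}
    (hcoactO : EndOpCoactChar k H coactM coactO)
    (hcoactD : DualCoactChar k H (fun h => S h) coactM coactD)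
    (hcoactED : EndCoactChar k H Sinv coactD coactED)
    (hι : ∀ u f m, ι u f m = f (u.unop m)) (u : (Module.End k M)ᵐᵒᵖ) :
    coactED (ι u) = LinearMap.rTensor H ι (coactO u) := by
  refine ext_of_rTensor_applyₗ fun f ψ => ?_
  obtain ⟨m, rfl⟩ := (Module.bijective_dual_eval k M).2 ψ
  apply (TensorProduct.lid k H).injective
  obtain ⟨t, m₀, m₁, hm⟩ := exists_finset_nat_sum_tmul (coactM m)
  choose r n₀ n₁ hn using fun p => exists_finset_nat_sum_tmul (coactM (u.unop (m₀ p)))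
  trans ∑ p ∈ t, ∑ q ∈ r p, f (n₀ p q) • (n₁ p q * S (m₁ p))
  · obtain ⟨s, f₀, f₁, hf⟩ := exists_finset_nat_sum_tmul (coactD f)
    choose r' g₀ g₁ hg using fun j => exists_finset_nat_sum_tmul (coactD (ι u (f₀ j)))
    rw [LinearMap.rTensor_comp_apply, hcoactED (ι u) f s f₀ f₁ r' g₀ g₁ hf (fun j _ => hg j)]
    calc _ = ∑ j ∈ s, Sinv (f₁ j) * ∑ l ∈ r' j, g₀ j l m • g₁ j l := by
          simp only [map_sum, LinearMap.rTensor_tmul, TensorProduct.lid_tmul, Finset.mul_sum,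
            mul_smul_comm, Module.Dual.eval_apply]
      _ = ∑ j ∈ s, Sinv (f₁ j) * ∑ p ∈ t, f₀ j (u.unop (m₀ p)) • S (m₁ p) := by
          refine Finset.sum_congr rfl fun j _ => ?_
          simp only [hcoactD.sum_smul (hg j) hm, hι]
      _ = ∑ p ∈ t, (∑ j ∈ s, f₀ j (u.unop (m₀ p)) • Sinv (f₁ j)) * S (m₁ p) := by
          simp only [Finset.mul_sum, Finset.sum_mul, mul_smul_comm, smul_mul_assoc]
          exact Finset.sum_comm
      _ = _ := by
          simp only [hcoactD.sum_smul_antipodeInv hS hf (hn _), Finset.sum_mul, smul_mul_assoc]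
  · have hcomp : (Module.Dual.eval k M m ∘ₗ LinearMap.applyₗ f) ∘ₗ ι
        = f ∘ₗ LinearMap.applyₗ m ∘ₗ (MulOpposite.opLinearEquiv k).symm.toLinearMap :=
      LinearMap.ext fun v => hι v f m
    rw [← LinearMap.rTensor_comp_apply, hcomp, LinearMap.rTensor_comp_apply,
      hcoactO u m t m₀ m₁ r n₀ n₁ hm fun p _ => hn p]
    simp only [map_sum, LinearMap.rTensor_tmul, TensorProduct.lid_tmul]

end Transpose

end GYD

theorem statement_15_general
    (k H : Type) [Field k] [Ring H] [HopfAlgebra k H]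
    (Sinv : H → H) (hS : GYD.IsAntipodeInv k H Sinv)
    (β : H ≃ₗ[k] H)
    (hβ : GYD.IsHopfAut k H β)
    (M : Type) [AddCommGroup M] [Module k M] [FiniteDimensional k M]
    (actM : H →ₗ[k] M →ₗ[k] M) (coactM : M →ₗ[k] M ⊗[k] H)
    -- End(M)^op
    (actO : H →ₗ[k] (Module.End k M)ᵐᵒᵖ →ₗ[k] (Module.End k M)ᵐᵒᵖ)
    (coactO : (Module.End k M)ᵐᵒᵖ →ₗ[k] (Module.End k M)ᵐᵒᵖ ⊗[k] H)
    (hactO : GYD.EndOpActChar k H ⇑β.symm Sinv actM actO)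
    (hcoactO : GYD.EndOpCoactChar k H coactM coactO)
    -- the right dual ◇M, a (β, α)-Yetter-Drinfeld module
    (actD : H →ₗ[k] Module.Dual k M →ₗ[k] Module.Dual k M)
    (coactD : Module.Dual k M →ₗ[k] Module.Dual k M ⊗[k] H)
    (hactD : GYD.DualActChar k H Sinv actM actD)
    (hcoactD : GYD.DualCoactChar k H (fun h => HopfAlgebra.antipode (R := k) h) coactM coactD)
    -- End(◇M)
    (actED : H →ₗ[k] Module.End k (Module.Dual k M) →ₗ[k] Module.End k (Module.Dual k M))
    (coactED : Module.End k (Module.Dual k M) →ₗ[k] Module.End k (Module.Dual k M) ⊗[k] H)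
    (hactED : GYD.EndActChar k H ⇑β.symm actD actED)
    (hcoactED : GYD.EndCoactChar k H Sinv coactD coactED)
    -- the transpose map ι(u)(f) = f ∘ u
    (ι : (Module.End k M)ᵐᵒᵖ →ₗ[k] Module.End k (Module.Dual k M))
    (hι : ∀ (u : (Module.End k M)ᵐᵒᵖ) (f : Module.Dual k M) (m : M),
        ι u f m = f (u.unop m)) :
    Function.Bijective ι ∧
    (∀ u v : (Module.End k M)ᵐᵒᵖ, ι (u * v) = ι u * ι v) ∧
    ι 1 = 1 ∧
    (∀ (h : H) (u : (Module.End k M)ᵐᵒᵖ), ι (actO h u) = actED h (ι u)) ∧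
    (∀ u : (Module.End k M)ᵐᵒᵖ, coactED (ι u) = LinearMap.rTensor H ι (coactO u)) := by
  have hι_eq : ∀ u, ι u = Module.Dual.transpose u.unop := fun u => by
    ext f m
    exact hι u f m
  refine ⟨?_, fun u v => ?_, ?_,
    GYD.transpose_act_eq hS hβ.antipode_symm_apply hactO hactD hactED hι,
    GYD.transpose_coact_eq hS hcoactO hcoactD hcoactED hι⟩
  · rw [show ⇑ι = Module.Dual.transpose ∘ MulOpposite.unop from funext hι_eq]
    exact Module.Dual.transpose_bijective.comp MulOpposite.unop_bijective
  · rw [hι_eq, hι_eq, hι_eq]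
    rfl
  · rw [hι_eq]
    rfl

theorem statement_15
    (k H : Type) [Field k] [Ring H] [HopfAlgebra k H]
    (Sinv : H → H) (hS : GYD.IsAntipodeInv k H Sinv)
    (α β : H ≃ₗ[k] H)
    (hα : GYD.IsHopfAut k H α) (hβ : GYD.IsHopfAut k H β)
    (M : Type) [AddCommGroup M] [Module k M] [FiniteDimensional k M]
    (actM : H →ₗ[k] M →ₗ[k] M) (coactM : M →ₗ[k] M ⊗[k] H)
    (hM : GYD.IsYD k H Sinv ⇑α ⇑β actM coactM)
    -- End(M)^op
    (actO : H →ₗ[k] (Module.End k M)ᵐᵒᵖ →ₗ[k] (Module.End k M)ᵐᵒᵖ)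
    (coactO : (Module.End k M)ᵐᵒᵖ →ₗ[k] (Module.End k M)ᵐᵒᵖ ⊗[k] H)
    (hactO : GYD.EndOpActChar k H ⇑β.symm Sinv actM actO)
    (hcoactO : GYD.EndOpCoactChar k H coactM coactO)
    -- the right dual ◇M, a (β, α)-Yetter-Drinfeld module
    (actD : H →ₗ[k] Module.Dual k M →ₗ[k] Module.Dual k M)
    (coactD : Module.Dual k M →ₗ[k] Module.Dual k M ⊗[k] H)
    (hactD : GYD.DualActChar k H Sinv actM actD)
    (hcoactD : GYD.DualCoactChar k H (fun h => HopfAlgebra.antipode (R := k) h) coactM coactD)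
    -- End(◇M)
    (actED : H →ₗ[k] Module.End k (Module.Dual k M) →ₗ[k] Module.End k (Module.Dual k M))
    (coactED : Module.End k (Module.Dual k M) →ₗ[k] Module.End k (Module.Dual k M) ⊗[k] H)
    (hactED : GYD.EndActChar k H ⇑β.symm actD actED)
    (hcoactED : GYD.EndCoactChar k H Sinv coactD coactED)
    -- the transpose map ι(u)(f) = f ∘ u
    (ι : (Module.End k M)ᵐᵒᵖ →ₗ[k] Module.End k (Module.Dual k M))
    (hι : ∀ (u : (Module.End k M)ᵐᵒᵖ) (f : Module.Dual k M) (m : M),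
        ι u f m = f (u.unop m)) :
    Function.Bijective ι ∧
    (∀ u v : (Module.End k M)ᵐᵒᵖ, ι (u * v) = ι u * ι v) ∧
    ι 1 = 1 ∧
    (∀ (h : H) (u : (Module.End k M)ᵐᵒᵖ), ι (actO h u) = actED h (ι u)) ∧
    (∀ u : (Module.End k M)ᵐᵒᵖ, coactED (ι u) = LinearMap.rTensor H ι (coactO u)) :=
  statement_15_general k H Sinv hS β hβ M actM coactM actO coactO hactO hcoactO actD coactD hactD
    hcoactD actED coactED hactED hcoactED ι hι

end
end
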